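/- Let $0<\gamma\le 1$, $1<q<\infty$, $w\in\mathcal{A}_q$, $y\in\mathbb{R}^n$, $r>0$, $B=B(y,r)$, and let $f$ be supported in $(2B)^c$. Then for every $x\in B$, $S_\gamma(f)(x) \le C\sum_{k=1}^\infty \frac{1}{|2^{k+1}B|}\int_{2^{k+1}B\setminus 2^k B}|f(z)|\,dz$, with $C$ depending only on $n$. -/

import Mathlib

open MeasureTheory Metric ENNReal

noncomputable section

/-- The family `𝒞_γ`: functions supported in the closed unit ball, with vanishing
integral, satisfying the Hölder condition `|φ(x) - φ(x')| ≤ |x - x'|^γ`. -/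
def IsCgamma (n : ℕ) (γ : ℝ) (φ : EuclideanSpace ℝ (Fin n) → ℝ) : Prop :=
  Function.support φ ⊆ closedBall 0 1 ∧ (∫ x, φ x) = 0 ∧
    ∀ x x' : EuclideanSpace ℝ (Fin n), |φ x - φ x'| ≤ ‖x - x'‖ ^ γ

/-- `sup_{φ ∈ 𝒞_γ} |f * φ_t(y)|`, where `φ_t(x) = t^{-n} φ(x/t)`. -/
def intAmp (n : ℕ) (γ : ℝ) (f : EuclideanSpace ℝ (Fin n) → ℝ)
    (y : EuclideanSpace ℝ (Fin n)) (t : ℝ) : ℝ≥0∞ :=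
  ⨆ (φ : EuclideanSpace ℝ (Fin n) → ℝ) (_ : IsCgamma n γ φ),
    ENNReal.ofReal |∫ z, f z * (t ^ (-(n : ℝ)) * φ (t⁻¹ • (y - z)))|

/-- The varying-aperture intrinsic square function `S_{γ,β}`:
`S_{γ,β}(f)(x) = (∬_{Γ_β(x)} (sup_{φ ∈ 𝒞_γ} |f * φ_t(y)|)² dy dt / t^{n+1})^{1/2}`. -/
def Sgb (n : ℕ) (γ β : ℝ) (f : EuclideanSpace ℝ (Fin n) → ℝ)
    (x : EuclideanSpace ℝ (Fin n)) : ℝ≥0∞ :=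
  (∫⁻ t in Set.Ioi (0 : ℝ),
      (∫⁻ y in ball x (β * t), intAmp n γ f y t ^ 2) /
        ENNReal.ofReal (t ^ ((n : ℝ) + 1))) ^ ((1 : ℝ) / 2)

/-- The intrinsic Littlewood–Paley `g^*_λ` function `g^*_{λ,γ}`. -/
def gStar (n : ℕ) (γ lam : ℝ) (f : EuclideanSpace ℝ (Fin n) → ℝ)
    (x : EuclideanSpace ℝ (Fin n)) : ℝ≥0∞ :=
  (∫⁻ t in Set.Ioi (0 : ℝ),
      (∫⁻ y, ENNReal.ofReal (t / (t + dist x y)) ^ (lam * (n : ℝ)) *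
          intAmp n γ f y t ^ 2) /
        ENNReal.ofReal (t ^ ((n : ℝ) + 1))) ^ ((1 : ℝ) / 2)
/-- The Muckenhoupt `𝒜_q` condition for a weight `w` on `ℝⁿ`. -/
def IsAq (n : ℕ) (q : ℝ) (w : EuclideanSpace ℝ (Fin n) → ℝ) : Prop :=
  (∀ x, 0 < w x) ∧ LocallyIntegrable w volume ∧
  ∃ C : ℝ, 0 < C ∧ ∀ (y : EuclideanSpace ℝ (Fin n)) (r : ℝ), 0 < r →
    ((volume (ball y r)).toReal⁻¹ * ∫ x in ball y r, w x) *
      ((volume (ball y r)).toReal⁻¹ * ∫ x in ball y r, w x ^ (-1 / (q - 1))) ^ (q - 1) ≤ C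

/-- Outer `L^p` norm (usual modification when `p = ∞`). -/
def outerNorm {n : ℕ} (p : ℝ≥0∞) (g : EuclideanSpace ℝ (Fin n) → ℝ≥0∞) : ℝ≥0∞ :=
  if p = ∞ then essSup g volume
  else (∫⁻ y, g y ^ p.toReal) ^ (1 / p.toReal)

/-! For `(u, t)` in the cone over `x ∈ B`, the kernel `φ_t(u - ·)` is bounded by `3 t⁻ⁿ` and
supported in the closed ball `B̄(u, t)`, which meets the annulus `2^{k+2}B \ 2^{k+1}B` only when
`t ≥ 2^{k-1} r`. Hence `sup_φ |f * φ_t(u)| ≤ 3 t⁻ⁿ ∑_k 1[t ≥ 2^{k-1} r] a_k` with `a_k` the integral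
of `|f|` over that annulus, and integrating over `u ∈ B(x, t)` gives
`S_γ(f)(x)² ≤ 9 |B(0,1)| ∫_0^∞ (∑_k 1[t ≥ 2^{k-1} r] a_k t^{-n-1/2})² dt`.
Minkowski's inequality in `L²(dt)` bounds the square root of the right side by
`3 |B(0,1)|^{1/2} ∑_k a_k (2^{k-1} r)⁻ⁿ`, and `(2^{k-1} r)⁻ⁿ = 8ⁿ |B(0,1)| / |2^{k+2}B|`. -/

open Set

theorem ENNReal.rpow_one_div_two_le_of_le_sq {c d : ℝ≥0∞} (h : c ≤ d ^ 2) :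
    c ^ (1 / 2 : ℝ) ≤ d := by
  rwa [one_div, ENNReal.rpow_inv_le_iff two_pos, ENNReal.rpow_two]

theorem lintegral_mul_le_of_lintegral_sq_le {α : Type*} [MeasurableSpace α] {μ : Measure α}
    {f g : α → ℝ≥0∞} (hf : AEMeasurable f μ) (hg : AEMeasurable g μ) {a b : ℝ≥0∞}
    (ha : ∫⁻ x, f x ^ 2 ∂μ ≤ a ^ 2) (hb : ∫⁻ x, g x ^ 2 ∂μ ≤ b ^ 2) :
    ∫⁻ x, f x * g x ∂μ ≤ a * b := by
  calc ∫⁻ x, f x * g x ∂μ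
      ≤ (∫⁻ x, f x ^ (2 : ℝ) ∂μ) ^ (1 / 2 : ℝ) * (∫⁻ x, g x ^ (2 : ℝ) ∂μ) ^ (1 / 2 : ℝ) :=
        ENNReal.lintegral_mul_le_Lp_mul_Lq μ Real.HolderConjugate.two_two hf hg
    _ ≤ a * b := by
        simp only [ENNReal.rpow_two]
        exact mul_le_mul' (rpow_one_div_two_le_of_le_sq ha) (rpow_one_div_two_le_of_le_sq hb)

theorem ENNReal.tsum_sq {ι : Type*} (c : ι → ℝ≥0∞) :
    (∑' k, c k) ^ 2 = ∑' j, ∑' k, c j * c k := by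
  rw [sq, ← ENNReal.tsum_mul_right]
  simp only [← ENNReal.tsum_mul_left]

theorem lintegral_tsum_sq_le {α ι : Type*} [MeasurableSpace α] [Countable ι] {μ : Measure α}
    {g : ι → α → ℝ≥0∞} (hg : ∀ k, AEMeasurable (g k) μ) {c : ι → ℝ≥0∞}
    (hc : ∀ k, ∫⁻ x, g k x ^ 2 ∂μ ≤ c k ^ 2) :
    ∫⁻ x, (∑' k, g k x) ^ 2 ∂μ ≤ (∑' k, c k) ^ 2 := by
  have hgg : ∀ j k, AEMeasurable (fun x => g j x * g k x) μ := fun j k => (hg j).mul (hg k)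
  calc ∫⁻ x, (∑' k, g k x) ^ 2 ∂μ = ∑' j, ∑' k, ∫⁻ x, g j x * g k x ∂μ := by
        simp_rw [ENNReal.tsum_sq]
        rw [lintegral_tsum fun j => AEMeasurable.tsum (hgg j)]
        exact tsum_congr fun j => lintegral_tsum (hgg j)
    _ ≤ ∑' j, ∑' k, c j * c k := by
        gcongr with j k
        exact lintegral_mul_le_of_lintegral_sq_le (hg j) (hg k) (hc j) (hc k)
    _ = (∑' k, c k) ^ 2 := (ENNReal.tsum_sq c).symm

theorem sq_rpow_neg_add_half {t : ℝ} (ht : 0 ≤ t) (n : ℕ) :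
    (t ^ (-((n : ℝ) + 1 / 2))) ^ 2 = t ^ (-(2 * n + 1) : ℝ) := by
  rw [← Real.rpow_mul_natCast ht]
  ring_nf

theorem lintegral_Ioi_rpow_of_lt {a : ℝ} (ha : a < -1) {c : ℝ} (hc : 0 < c) :
    ∫⁻ t in Ioi c, ENNReal.ofReal (t ^ a) = ENNReal.ofReal (-c ^ (a + 1) / (a + 1)) := by
  rw [← integral_Ioi_rpow_of_lt ha hc, ofReal_integral_eq_lintegral_ofReal
    (integrableOn_Ioi_rpow_of_lt ha hc)]
  filter_upwards [ae_restrict_mem measurableSet_Ioi] with t ht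
  exact Real.rpow_nonneg (hc.trans ht).le a

theorem lintegral_Ioi_indicator_mul_rpow_sq_le {n : ℕ} (hn : 0 < n) {β : ℝ} (hβ : 0 < β)
    (a : ℝ≥0∞) :
    ∫⁻ t in Ioi 0, ((Ici β).indicator (fun _ => a) t * ENNReal.ofReal (t ^ (-((n : ℝ) + 1 / 2))))
        ^ 2 ≤ (a * ENNReal.ofReal ((β ^ n)⁻¹)) ^ 2 := by
  have hn' : (1 : ℝ) ≤ n := by exact_mod_cast hn
  calc ∫⁻ t in Ioi 0, ((Ici β).indicator (fun _ => a) t *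
          ENNReal.ofReal (t ^ (-((n : ℝ) + 1 / 2)))) ^ 2
      = ∫⁻ t in Ioi 0, (Ici β).indicator
          (fun t => a ^ 2 * ENNReal.ofReal (t ^ (-(2 * n + 1) : ℝ))) t := by
        refine setLIntegral_congr_fun measurableSet_Ioi fun t ht => ?_
        by_cases htβ : t ∈ Ici β
        · simp only [indicator_of_mem htβ, mul_pow, ← ofReal_pow (Real.rpow_nonneg ht.le _),
            sq_rpow_neg_add_half ht.le]
        · simp [indicator_of_notMem htβ]
    _ ≤ ∫⁻ t in Ici β, a ^ 2 * ENNReal.ofReal (t ^ (-(2 * n + 1) : ℝ)) := by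
        rw [← lintegral_indicator measurableSet_Ici]
        exact setLIntegral_le_lintegral _ _
    _ = a ^ 2 * ENNReal.ofReal (β ^ (-(2 * n) : ℝ) / (2 * n)) := by
        rw [← setLIntegral_congr Ioi_ae_eq_Ici, lintegral_const_mul _ (by fun_prop),
          lintegral_Ioi_rpow_of_lt (by linarith) hβ]
        congr 2
        ring_nf
    _ ≤ (a * ENNReal.ofReal ((β ^ n)⁻¹)) ^ 2 := by
        rw [mul_pow, ← ofReal_pow (by positivity)]
        gcongr
        have hpow : ((β ^ n)⁻¹) ^ 2 = β ^ (-(2 * n) : ℝ) := by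
          rw [← Real.rpow_natCast β n, ← Real.rpow_neg hβ.le, ← Real.rpow_mul_natCast hβ.le]
          ring_nf
        rw [hpow]
        exact div_le_self (by positivity) (by linarith)

theorem abs_le_three_of_holder {E : Type*} [NormedAddCommGroup E] [NormedSpace ℝ E]
    [Nontrivial E] {φ : E → ℝ} {γ : ℝ} (hγ : γ ≤ 1)
    (hsupp : Function.support φ ⊆ closedBall 0 1)
    (hφ : ∀ x x', |φ x - φ x'| ≤ ‖x - x'‖ ^ γ) (v : E) : |φ v| ≤ 3 := by
  have hzero : ∀ u, 1 < ‖u‖ → φ u = 0 := fun u hu =>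
    Function.notMem_support.mp fun h => by
      simpa [hu.not_ge] using hsupp h
  by_cases hv : 1 < ‖v‖
  · simp [hzero v hv]
  obtain ⟨u, hu⟩ := exists_norm_eq E (show (0 : ℝ) ≤ 3 by norm_num)
  have hvu : 1 < ‖v + u‖ := by
    have := norm_sub_le (v + u) v
    rw [add_sub_cancel_left, hu] at this
    linarith
  calc |φ v| = |φ v - φ (v + u)| := by rw [hzero _ hvu, sub_zero]
    _ ≤ ‖v - (v + u)‖ ^ γ := hφ v (v + u)
    _ = 3 ^ γ := by rw [show v - (v + u) = -u by abel, norm_neg, hu]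
    _ ≤ 3 := by simpa using Real.rpow_le_rpow_of_exponent_le (by norm_num : (1 : ℝ) ≤ 3) hγ

/-- The paper's annulus `2^{k+1}B \ 2^k B` for `B = B(y, r)`, indexed from `0` instead of `1`. -/
def dyadicAnnulus {X : Type*} [PseudoMetricSpace X] (y : X) (r : ℝ) (k : ℕ) : Set X :=
  ball y (2 ^ (k + 2) * r) \ ball y (2 ^ (k + 1) * r)

theorem exists_mem_dyadicAnnulus {X : Type*} [PseudoMetricSpace X] {y z : X} {r : ℝ}
    (hr : 0 < r) (hz : 2 * r ≤ dist z y) : ∃ k, z ∈ dyadicAnnulus y r k := by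
  obtain ⟨k, hk, hk'⟩ := exists_nat_pow_near ((one_le_div (by positivity)).mpr hz) one_lt_two
  refine ⟨k, ?_, ?_⟩
  · rw [mem_ball, pow_succ, pow_succ]
    rw [div_lt_iff₀ (by positivity), pow_succ] at hk'
    linarith
  · rw [mem_ball, not_lt, pow_succ]
    rw [le_div_iff₀ (by positivity)] at hk
    linarith

theorem le_of_mem_dyadicAnnulus {X : Type*} [PseudoMetricSpace X] {y z : X} {r t : ℝ} {k : ℕ}
    (hr : 0 ≤ r) (hz : z ∈ dyadicAnnulus y r k) (hzy : dist z y < 2 * t + r) :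
    2 ^ k * r / 2 ≤ t := by
  have h : 2 ^ (k + 1) * r ≤ dist z y := not_lt.mp hz.2
  rw [pow_succ] at h
  nlinarith [one_le_pow₀ (M₀ := ℝ) one_le_two (n := k)]

theorem lintegral_closedBall_le_tsum_dyadicAnnulus {X : Type*} [PseudoMetricSpace X]
    [MeasurableSpace X] [OpensMeasurableSpace X] {μ : Measure X} {g : X → ℝ≥0∞} {x y u : X}
    {r t : ℝ} (hr : 0 < r) (hx : x ∈ ball y r) (hu : u ∈ ball x t)
    (hg : ∀ z ∈ ball y (2 * r), g z = 0) :
    ∫⁻ z in closedBall u t, g z ∂μ ≤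
      ∑' k, (Ici (2 ^ k * r / 2)).indicator (fun _ => ∫⁻ z in dyadicAnnulus y r k, g z ∂μ) t := by
  have hcover : closedBall u t ⊆ ball y (2 * r) ∪ ⋃ k, closedBall u t ∩ dyadicAnnulus y r k := by
    intro z hz
    by_cases hzy : z ∈ ball y (2 * r)
    · exact Or.inl hzy
    · obtain ⟨k, hk⟩ := exists_mem_dyadicAnnulus hr (not_lt.mp hzy)
      exact Or.inr (mem_iUnion.mpr ⟨k, hz, hk⟩)
  calc ∫⁻ z in closedBall u t, g z ∂μ
      ≤ ∫⁻ z in ball y (2 * r), g z ∂μ +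
          ∫⁻ z in ⋃ k, closedBall u t ∩ dyadicAnnulus y r k, g z ∂μ :=
        (lintegral_mono_set hcover).trans (lintegral_union_le _ _ _)
    _ ≤ ∑' k, ∫⁻ z in closedBall u t ∩ dyadicAnnulus y r k, g z ∂μ := by
        rw [setLIntegral_congr_fun measurableSet_ball hg, lintegral_zero, zero_add]
        exact lintegral_iUnion_le _ _
    _ ≤ _ := by
        gcongr with k
        by_cases hk : 2 ^ k * r / 2 ≤ t
        · rw [indicator_of_mem (mem_Ici.mpr hk)]
          exact lintegral_mono_set inter_subset_right
        · have hempty : closedBall u t ∩ dyadicAnnulus y r k = ∅ := by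
            refine eq_empty_of_forall_notMem fun z ⟨hzu, hzk⟩ => hk ?_
            refine le_of_mem_dyadicAnnulus hr.le hzk ?_
            linarith [dist_triangle4 z u x y, mem_closedBall.mp hzu, mem_ball.mp hu,
              mem_ball.mp hx, dist_comm u x]
          simp [hempty]

theorem intAmp_le_lintegral_closedBall {n : ℕ} [Nontrivial (EuclideanSpace ℝ (Fin n))]
    {γ : ℝ} (hγ : γ ≤ 1) (f : EuclideanSpace ℝ (Fin n) → ℝ) (u : EuclideanSpace ℝ (Fin n))
    {t : ℝ} (ht : 0 < t) :
    intAmp n γ f u t ≤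
      ENNReal.ofReal (3 * t ^ (-(n : ℝ))) * ∫⁻ z in closedBall u t, ENNReal.ofReal |f z| := by
  refine iSup₂_le fun φ ⟨hsupp, _, hφ⟩ => ?_
  rw [← lintegral_const_mul' _ _ ofReal_ne_top, ← lintegral_indicator measurableSet_closedBall,
    ← Real.enorm_eq_ofReal_abs]
  refine (enorm_integral_le_lintegral_enorm _).trans (lintegral_mono fun z => ?_)
  rw [Real.enorm_eq_ofReal_abs]
  by_cases hz : z ∈ closedBall u t
  · rw [indicator_of_mem hz, ← ofReal_mul (by positivity)]
    gcongr
    rw [abs_mul, abs_mul, abs_of_pos (by positivity : 0 < t ^ (-(n : ℝ)))]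
    have hφ3 := abs_le_three_of_holder hγ hsupp hφ (t⁻¹ • (u - z))
    calc |f z| * (t ^ (-(n : ℝ)) * |φ (t⁻¹ • (u - z))|) ≤ |f z| * (t ^ (-(n : ℝ)) * 3) := by
          gcongr
      _ = 3 * t ^ (-(n : ℝ)) * |f z| := by ring
  · have hout : 1 < ‖t⁻¹ • (u - z)‖ := by
      rw [norm_smul, norm_inv, Real.norm_of_nonneg ht.le, ← dist_eq_norm, dist_comm,
        one_lt_inv_mul₀ ht]
      simpa using hz
    have hφz : φ (t⁻¹ • (u - z)) = 0 :=
      Function.notMem_support.mp fun h => by simpa [hout.not_ge] using hsupp h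
    simp [indicator_of_notMem hz, hφz]

theorem lintegral_ball_sq_div_le {n : ℕ} [Nontrivial (EuclideanSpace ℝ (Fin n))]
    {F : EuclideanSpace ℝ (Fin n) → ℝ≥0∞} {x : EuclideanSpace ℝ (Fin n)} {t : ℝ} (ht : 0 < t)
    {S : ℝ≥0∞}
    (hF : ∀ u ∈ ball x t, F u ≤ ENNReal.ofReal (3 * t ^ (-(n : ℝ))) * S) :
    (∫⁻ u in ball x (1 * t), F u ^ 2) / ENNReal.ofReal (t ^ ((n : ℝ) + 1)) ≤
      9 * volume (ball (0 : EuclideanSpace ℝ (Fin n)) 1) *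
        (S * ENNReal.ofReal (t ^ (-((n : ℝ) + 1 / 2)))) ^ 2 := by
  have hscale : ENNReal.ofReal (3 * t ^ (-(n : ℝ))) ^ 2 * ENNReal.ofReal (t ^ n) /
      ENNReal.ofReal (t ^ ((n : ℝ) + 1)) = 9 * ENNReal.ofReal (t ^ (-((n : ℝ) + 1 / 2))) ^ 2 := by
    rw [← ofReal_pow (by positivity), ← ofReal_pow (by positivity), ← ofReal_mul (by positivity),
      ← ofReal_div_of_pos (by positivity), ← ofReal_ofNat 9, ← ofReal_mul (by norm_num),
      sq_rpow_neg_add_half ht.le, mul_pow, ← Real.rpow_natCast t n,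
      ← Real.rpow_mul_natCast ht.le, mul_assoc, ← Real.rpow_add ht, mul_div_assoc,
      ← Real.rpow_sub ht]
    ring_nf
  calc (∫⁻ u in ball x (1 * t), F u ^ 2) / ENNReal.ofReal (t ^ ((n : ℝ) + 1))
      ≤ (ENNReal.ofReal (3 * t ^ (-(n : ℝ))) * S) ^ 2 * volume (ball x t) /
          ENNReal.ofReal (t ^ ((n : ℝ) + 1)) := by
        rw [one_mul, ← setLIntegral_const]
        exact ENNReal.div_le_div_right
          (setLIntegral_mono' measurableSet_ball fun u hu => pow_le_pow_left' (hF u hu) 2) _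
    _ = 9 * volume (ball (0 : EuclideanSpace ℝ (Fin n)) 1) *
          (S * ENNReal.ofReal (t ^ (-((n : ℝ) + 1 / 2)))) ^ 2 := by
        rw [Measure.addHaar_ball _ _ ht.le, finrank_euclideanSpace_fin]
        calc _ = ENNReal.ofReal (3 * t ^ (-(n : ℝ))) ^ 2 * ENNReal.ofReal (t ^ n) /
              ENNReal.ofReal (t ^ ((n : ℝ) + 1)) *
                (S ^ 2 * volume (ball (0 : EuclideanSpace ℝ (Fin n)) 1)) := by
              simp only [div_eq_mul_inv]
              ring
          _ = _ := by
              rw [hscale]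
              ring

theorem intAmp_le_tsum_dyadicAnnulus {n : ℕ} [Nontrivial (EuclideanSpace ℝ (Fin n))] {γ : ℝ}
    (hγ : γ ≤ 1) {f : EuclideanSpace ℝ (Fin n) → ℝ} {x y u : EuclideanSpace ℝ (Fin n)} {r t : ℝ}
    (hr : 0 < r) (ht : 0 < t) (hf : ∀ z ∈ ball y (2 * r), f z = 0) (hx : x ∈ ball y r)
    (hu : u ∈ ball x t) :
    intAmp n γ f u t ≤ ENNReal.ofReal (3 * t ^ (-(n : ℝ))) * ∑' k, (Ici (2 ^ k * r / 2)).indicator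
      (fun _ => ∫⁻ z in dyadicAnnulus y r k, ENNReal.ofReal |f z|) t :=
  (intAmp_le_lintegral_closedBall hγ f u ht).trans <| by
    gcongr
    exact lintegral_closedBall_le_tsum_dyadicAnnulus hr hx hu fun z hz => by simp [hf z hz]

theorem Sgb_le_tsum_dyadicAnnulus {n : ℕ} (hn : 0 < n) {γ : ℝ} (hγ : γ ≤ 1)
    {f : EuclideanSpace ℝ (Fin n) → ℝ} {x y : EuclideanSpace ℝ (Fin n)} {r : ℝ} (hr : 0 < r)
    (hf : ∀ z ∈ ball y (2 * r), f z = 0) (hx : x ∈ ball y r) {κ : ℝ}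
    (hV : volume (ball (0 : EuclideanSpace ℝ (Fin n)) 1) = ENNReal.ofReal κ) :
    Sgb n γ 1 f x ≤ ENNReal.ofReal (3 * 8 ^ n * κ * √κ) *
      ∑' k, (volume (ball y (2 ^ (k + 2) * r)))⁻¹ *
        ∫⁻ z in dyadicAnnulus y r k, ENNReal.ofReal |f z| := by
  have : Nontrivial (EuclideanSpace ℝ (Fin n)) := by
    obtain ⟨m, rfl⟩ := Nat.exists_eq_add_of_lt hn
    infer_instance
  have hκ : 0 < κ := ofReal_pos.mp (hV ▸ measure_ball_pos _ _ one_pos)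
  set a : ℕ → ℝ≥0∞ := fun k => ∫⁻ z in dyadicAnnulus y r k, ENNReal.ofReal |f z|
  set β : ℕ → ℝ := fun k => 2 ^ k * r / 2
  have hβ : ∀ k, 0 < β k := fun k => by positivity
  set e : ℝ → ℝ≥0∞ := fun t => ENNReal.ofReal (t ^ (-((n : ℝ) + 1 / 2)))
  set g : ℕ → ℝ → ℝ≥0∞ := fun k t => (Ici (β k)).indicator (fun _ => a k) t * e t
  have hg : ∀ k, AEMeasurable (g k) (volume.restrict (Ioi 0)) := fun k =>
    ((measurable_const.indicator measurableSet_Ici).mul (by fun_prop)).aemeasurable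
  have hvol : ∀ k, (volume (ball y (2 ^ (k + 2) * r)))⁻¹ =
      ENNReal.ofReal (((2 ^ (k + 2) * r) ^ n * κ)⁻¹) := fun k => by
    rw [Measure.addHaar_ball _ _ (by positivity), finrank_euclideanSpace_fin, hV,
      ← ofReal_mul (by positivity), ofReal_inv_of_pos (by positivity)]
  apply rpow_one_div_two_le_of_le_sq
  calc ∫⁻ t in Ioi 0, (∫⁻ u in ball x (1 * t), intAmp n γ f u t ^ 2) /
        ENNReal.ofReal (t ^ ((n : ℝ) + 1))
      ≤ ∫⁻ t in Ioi 0, ENNReal.ofReal (3 * √κ) ^ 2 * (∑' k, g k t) ^ 2 := by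
        refine setLIntegral_mono' measurableSet_Ioi fun t (ht : 0 < t) => ?_
        refine (lintegral_ball_sq_div_le ht fun u hu =>
          intAmp_le_tsum_dyadicAnnulus hγ hr ht hf hx hu).trans_eq ?_
        rw [← ofReal_pow (by positivity), mul_pow (3 : ℝ), Real.sq_sqrt hκ.le,
          ofReal_mul (by norm_num), ← hV]
        simp only [g, e, a, β, ENNReal.tsum_mul_right]
        norm_num
    _ = ENNReal.ofReal (3 * √κ) ^ 2 * ∫⁻ t in Ioi 0, (∑' k, g k t) ^ 2 :=
        lintegral_const_mul' _ _ (pow_ne_top ofReal_ne_top)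
    _ ≤ ENNReal.ofReal (3 * √κ) ^ 2 * (∑' k, a k * ENNReal.ofReal ((β k ^ n)⁻¹)) ^ 2 := by
        gcongr
        exact lintegral_tsum_sq_le hg fun k => lintegral_Ioi_indicator_mul_rpow_sq_le hn (hβ k) _
    _ = (ENNReal.ofReal (3 * 8 ^ n * κ * √κ) *
          ∑' k, (volume (ball y (2 ^ (k + 2) * r)))⁻¹ * a k) ^ 2 := by
        rw [← mul_pow, ← ENNReal.tsum_mul_left, ← ENNReal.tsum_mul_left]
        congr 1
        refine tsum_congr fun k => ?_
        rw [hvol, mul_left_comm, ← ofReal_mul (by positivity), ← mul_assoc,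
          ← ofReal_mul (by positivity), mul_comm]
        congr 2
        rw [show (2 : ℝ) ^ (k + 2) * r = 8 * β k by simp only [β]; ring, mul_pow]
        field_simp

theorem Sgb_zero {n : ℕ} {γ β : ℝ} (x : EuclideanSpace ℝ (Fin n)) : Sgb n γ β 0 x = 0 := by
  have hamp : ∀ u t, intAmp n γ 0 u t = 0 := by simp [intAmp]
  simp [Sgb, hamp]

/-- with `B = B(y,r)` and `f` supported in `(2B)ᶜ`, for every `x ∈ B`,
`S_γ(f)(x) ≤ C ∑_{k≥1} (1/|2^{k+1}B|) ∫_{2^{k+1}B \ 2^k B} |f|`, `C = C(n)`. -/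
theorem stmt15 (n : ℕ) :
    ∃ C : ℝ, 0 < C ∧ ∀ γ q : ℝ, 0 < γ → γ ≤ 1 → 1 < q →
      ∀ w : EuclideanSpace ℝ (Fin n) → ℝ, IsAq n q w →
      ∀ (y : EuclideanSpace ℝ (Fin n)) (r : ℝ), 0 < r →
      ∀ f : EuclideanSpace ℝ (Fin n) → ℝ, LocallyIntegrable f volume →
        (∀ x ∈ ball y (2 * r), f x = 0) →
        ∀ x ∈ ball y r,
          Sgb n γ 1 f x ≤ ENNReal.ofReal C *
            ∑' k : ℕ, (volume (ball y (2 ^ (k + 2) * r)))⁻¹ *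
              ∫⁻ z in ball y (2 ^ (k + 2) * r) \ ball y (2 ^ (k + 1) * r),
                ENNReal.ofReal |f z| := by
  set κ := (volume (ball (0 : EuclideanSpace ℝ (Fin n)) 1)).toReal
  have hκ : 0 < κ := toReal_pos (measure_ball_pos _ _ one_pos).ne' measure_ball_lt_top.ne
  refine ⟨3 * 8 ^ n * κ * √κ, by positivity, ?_⟩
  intro γ q _ hγ _ w _ y r hr f _ hf x hx
  rcases n.eq_zero_or_pos with rfl | hn
  · obtain rfl : f = 0 := funext fun z =>
      hf z (Subsingleton.elim y z ▸ mem_ball_self (by positivity))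
    simp [Sgb_zero]
  · exact Sgb_le_tsum_dyadicAnnulus hn hγ hr hf hx (ofReal_toReal measure_ball_lt_top.ne).symm
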